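/- Let H be a real Hilbert space and let (K_1,K_2) be a nonempty closed bounded convex proximal pair in H. Then for every x∈K_1, δ(x,K_2)² = δ(x,K_1)² + d(K_1,K_2)². -/

import Mathlib

open Filter Topology

variable {X : Type*} [NormedAddCommGroup X] [NormedSpace ℝ X]

/-- The distance between two sets: `d(A,B) = inf {‖x−y‖ : x ∈ A, y ∈ B}`. -/
noncomputable def setD (A B : Set X) : ℝ :=
  sInf {r : ℝ | ∃ x ∈ A, ∃ y ∈ B, r = ‖x - y‖}

/-- The diameter-type quantity `δ(A,B) = sup {‖x−y‖ : x ∈ A, y ∈ B}`. -/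
noncomputable def setDelta (A B : Set X) : ℝ :=
  sSup {r : ℝ | ∃ x ∈ A, ∃ y ∈ B, r = ‖x - y‖}

/-- `d(z,B) = inf {‖z−y‖ : y ∈ B}`. -/
noncomputable def ptD (z : X) (B : Set X) : ℝ :=
  sInf {r : ℝ | ∃ y ∈ B, r = ‖z - y‖}

/-- `δ(z,B) = sup {‖z−y‖ : y ∈ B}`. -/
noncomputable def ptDelta (z : X) (B : Set X) : ℝ :=
  sSup {r : ℝ | ∃ y ∈ B, r = ‖z - y‖}

/-- A pair `(A,B)` is semisharp proximal. -/
def SemisharpProximal (A B : Set X) : Prop :=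
  (∀ x ∈ A, ∀ y ∈ B, ∀ z ∈ B, ‖x - y‖ = setD A B → ‖x - z‖ = setD A B → y = z) ∧
  (∀ y ∈ B, ∀ x ∈ A, ∀ z ∈ A, ‖x - y‖ = setD A B → ‖z - y‖ = setD A B → x = z)

/-- The pair `(A,B)` has property UC. -/
def PropertyUC (A B : Set X) : Prop :=
  ∀ x y z : ℕ → X, (∀ n, x n ∈ A) → (∀ n, y n ∈ A) → (∀ n, z n ∈ B) →
    Tendsto (fun n => ‖x n - z n‖) atTop (𝓝 (setD A B)) →
    Tendsto (fun n => ‖y n - z n‖) atTop (𝓝 (setD A B)) →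
    Tendsto (fun n => ‖x n - y n‖) atTop (𝓝 (0 : ℝ))

/-- Weak convergence of a sequence. -/
def WeakConv (u : ℕ → X) (x : X) : Prop :=
  ∀ f : X →L[ℝ] ℝ, Tendsto (fun n => f (u n)) atTop (𝓝 (f x))

/-- The Kadec-Klee property of a normed space. -/
def KadecKleeProp (X : Type*) [NormedAddCommGroup X] [NormedSpace ℝ X] : Prop :=
  ∀ (u : ℕ → X) (x : X), WeakConv u x →
    Tendsto (fun n => ‖u n‖) atTop (𝓝 ‖x‖) → Tendsto u atTop (𝓝 x)

/-- `A` is weak approximatively compact with respect to `B`. -/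
def WeakApproxCompactWrt (A B : Set X) : Prop :=
  ∀ u : ℕ → X, (∀ n, u n ∈ A) →
    Tendsto (fun n => ptD (u n) B) atTop (𝓝 (setD A B)) →
    ∃ a ∈ A, ∃ φ : ℕ → ℕ, StrictMono φ ∧ WeakConv (u ∘ φ) a

/-- `A₀`, the set of points of `A` that realize the distance `d(A,B)`. -/
def proxA (A B : Set X) : Set X := {x ∈ A | ∃ y ∈ B, ‖x - y‖ = setD A B}

/-- `B₀`, the set of points of `B` that realize the distance `d(A,B)`. -/
def proxB (A B : Set X) : Set X := {y ∈ B | ∃ x ∈ A, ‖x - y‖ = setD A B}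

/-- The pair `(A,B)` is proximal: `A = A₀` and `B = B₀`. -/
def ProximalPair (A B : Set X) : Prop := A = proxA A B ∧ B = proxB A B

/-- `r(H₁,H₂) = inf {δ(x,H₂) : x ∈ H₁}`. -/
noncomputable def rr (H1 H2 : Set X) : ℝ := sInf {t : ℝ | ∃ x ∈ H1, t = ptDelta x H2}

/-- `R(H₁,H₂) = max {r(H₁,H₂), r(H₂,H₁)}`. -/
noncomputable def RR (H1 H2 : Set X) : ℝ := max (rr H1 H2) (rr H2 H1)

/-- `(H₁,H₂) ∈ Υ(A,B)`: nonempty closed bounded convex proximal sub-pairs of `(A,B)` at the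
same distance, with at least one of the two sets containing more than one point. -/
def Upsilon (A B H1 H2 : Set X) : Prop :=
  H1 ⊆ A ∧ H2 ⊆ B ∧ H1.Nonempty ∧ H2.Nonempty ∧ IsClosed H1 ∧ IsClosed H2 ∧
    Bornology.IsBounded H1 ∧ Bornology.IsBounded H2 ∧ Convex ℝ H1 ∧ Convex ℝ H2 ∧
    ProximalPair H1 H2 ∧ (¬ H1.Subsingleton ∨ ¬ H2.Subsingleton) ∧
    setD H1 H2 = setD A B

/-- `N(A,B) = sup {R(H₁,H₂)/δ(H₁,H₂) : (H₁,H₂) ∈ Υ(A,B)}`. -/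
noncomputable def NN (A B : Set X) : ℝ :=
  sSup {t : ℝ | ∃ H1 H2 : Set X, Upsilon A B H1 H2 ∧ t = RR H1 H2 / setDelta H1 H2}

/-- `(C₁,C₂) ∈ Ῡ(A,B)`: as `Υ(A,B)` but without requiring proximality. -/
def UpsilonBar (A B C1 C2 : Set X) : Prop :=
  C1 ⊆ A ∧ C2 ⊆ B ∧ C1.Nonempty ∧ C2.Nonempty ∧ IsClosed C1 ∧ IsClosed C2 ∧
    Bornology.IsBounded C1 ∧ Bornology.IsBounded C2 ∧ Convex ℝ C1 ∧ Convex ℝ C2 ∧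
    (¬ C1.Subsingleton ∨ ¬ C2.Subsingleton) ∧ setD C1 C2 = setD A B

/-- `c₀ = sup {R(C₁,C₂)/δ(C₁,C₂) : (C₁,C₂) ∈ Ῡ(A,B)}`. -/
noncomputable def cZero (A B : Set X) : ℝ :=
  sSup {t : ℝ | ∃ C1 C2 : Set X, UpsilonBar A B C1 C2 ∧ t = RR C1 C2 / setDelta C1 C2}

/-- `T` is a cyclic relatively nonexpansive mapping on `A ∪ B`. -/
def CyclicRelNonexpansive (A B : Set X) (T : X → X) : Prop :=
  Set.MapsTo T A B ∧ Set.MapsTo T B A ∧ ∀ x ∈ A, ∀ y ∈ B, ‖T x - T y‖ ≤ ‖x - y‖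

/-!
For convex sets in a strictly convex space, all best-approximation pairs `(x, y) ∈ A × B` have
the same difference `y - x`, by the midpoint argument. For a proximal pair this forces
`B = A + h` with `‖h‖ = d(A, B)`. Since `A + h` stays at distance at least `‖h‖` from `A`, the
vector `h` minimizes the norm on `h + (A - A)`, so in an inner product space `h ⟂ A - A`. Then
`‖x - (z + h)‖² = ‖x - z‖² + ‖h‖²` for `x, z ∈ A`, and taking suprema over `z` gives the result.
-/

open Set
open scoped InnerProductSpace

section Normed

variable {E : Type*} [NormedAddCommGroup E]

theorem setD_le_norm_sub {A B : Set E} {x y : E} (hx : x ∈ A) (hy : y ∈ B) :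
    setD A B ≤ ‖x - y‖ :=
  csInf_le ⟨0, by rintro r ⟨a, -, b, -, rfl⟩; positivity⟩ ⟨x, hx, y, hy, rfl⟩

theorem ptDelta_eq_sSup_image (x : E) (A : Set E) :
    ptDelta x A = sSup ((fun z => ‖x - z‖) '' A) := by
  simp only [ptDelta, image, eq_comm]

theorem bddAbove_image_norm_sub {A : Set E} (hA : Bornology.IsBounded A) (x : E) :
    BddAbove ((fun z => ‖x - z‖) '' A) := by
  obtain ⟨r, hr⟩ := (Metric.isBounded_iff_subset_closedBall x).mp hA
  refine ⟨r, ?_⟩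
  rintro _ ⟨z, hz, rfl⟩
  simpa [dist_eq_norm, norm_sub_rev] using hr hz

end Normed

section StrictlyConvex

variable {E : Type*} [NormedAddCommGroup E] [NormedSpace ℝ E] [StrictConvexSpace ℝ E]
  {A B : Set E}

theorem sub_eq_sub_of_norm_sub_eq_setD (hA : Convex ℝ A) (hB : Convex ℝ B) {x x' y y' : E}
    (hx : x ∈ A) (hx' : x' ∈ A) (hy : y ∈ B) (hy' : y' ∈ B)
    (hxy : ‖x - y‖ = setD A B) (hxy' : ‖x' - y'‖ = setD A B) : x - y = x' - y' := by
  have hmid : setD A B ≤ ‖(1 / 2 : ℝ) • (x - y + (x' - y'))‖ := by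
    have := setD_le_norm_sub (hA.add_smul_sub_mem hx hx' (t := 1 / 2) (by norm_num))
      (hB.add_smul_sub_mem hy hy' (t := 1 / 2) (by norm_num))
    convert this using 2
    module
  rw [norm_smul, Real.norm_of_nonneg (by norm_num)] at hmid
  refine eq_of_norm_eq_of_norm_add_eq (hxy.trans hxy'.symm) (le_antisymm (norm_add_le _ _) ?_)
  linarith

theorem ProximalPair.eq_image_add_right (hprox : ProximalPair A B) (hA : Convex ℝ A)
    (hB : Convex ℝ B) (hne : A.Nonempty) :
    ∃ h : E, ‖h‖ = setD A B ∧ B = (· + h) '' A := by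
  obtain ⟨x₀, hx₀⟩ := hne
  obtain ⟨-, y₀, hy₀, hxy₀⟩ : x₀ ∈ proxA A B := hprox.1 ▸ hx₀
  refine ⟨y₀ - x₀, by rwa [norm_sub_rev], Set.ext fun y => ⟨fun hy => ?_, ?_⟩⟩
  · obtain ⟨-, z, hz, hzy⟩ : y ∈ proxB A B := hprox.2 ▸ hy
    have := sub_eq_sub_of_norm_sub_eq_setD hA hB hz hx₀ hy hy₀ hzy hxy₀
    exact ⟨z, hz, by linear_combination (norm := module) this⟩
  · rintro ⟨z, hz, rfl⟩
    obtain ⟨-, y, hy, hzy⟩ : z ∈ proxA A B := hprox.1 ▸ hz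
    have := sub_eq_sub_of_norm_sub_eq_setD hA hB hz hx₀ hy hy₀ hzy hxy₀
    convert hy using 1
    linear_combination (norm := module) this

end StrictlyConvex

section InnerProduct

variable {E : Type*} [NormedAddCommGroup E] [InnerProductSpace ℝ E]

theorem real_inner_nonneg_of_norm_le_norm_add_smul {u v : E}
    (huv : ∀ t ∈ Ioc (0 : ℝ) 1, ‖u‖ ≤ ‖u + t • v‖) : 0 ≤ ⟪u, v⟫_ℝ := by
  -- `‖u + t v‖² - ‖u‖² = t (2 ⟪u, v⟫ + t ‖v‖²)`; let `t → 0⁺`.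
  have hlim : Tendsto (fun t : ℝ => 2 * ⟪u, v⟫_ℝ + t * ‖v‖ ^ 2) (𝓝[>] 0)
      (𝓝 (2 * ⟪u, v⟫_ℝ + 0 * ‖v‖ ^ 2)) :=
    ((continuous_const.add (continuous_id.mul continuous_const)).tendsto 0).mono_left
      nhdsWithin_le_nhds
  have hev : ∀ᶠ t in 𝓝[>] (0 : ℝ), 0 ≤ 2 * ⟪u, v⟫_ℝ + t * ‖v‖ ^ 2 := by
    filter_upwards [Ioc_mem_nhdsGT zero_lt_one] with t ht
    have hsq : ‖u‖ ^ 2 ≤ ‖u + t • v‖ ^ 2 := pow_le_pow_left₀ (norm_nonneg u) (huv t ht) 2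
    rw [norm_add_sq_real, real_inner_smul_right, norm_smul, Real.norm_of_nonneg ht.1.le] at hsq
    nlinarith [ht.1]
  have := ge_of_tendsto hlim hev
  linarith

theorem real_inner_sub_eq_zero_of_image_add_right {A : Set E} (hA : Convex ℝ A) {h : E}
    (hh : ‖h‖ = setD A ((· + h) '' A)) {z w : E} (hz : z ∈ A) (hw : w ∈ A) :
    ⟪h, z - w⟫_ℝ = 0 := by
  have key : ∀ z ∈ A, ∀ w ∈ A, 0 ≤ ⟪h, z - w⟫_ℝ := by
    intro z hz w hw
    refine real_inner_nonneg_of_norm_le_norm_add_smul fun t ht => ?_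
    have hp := hA.add_smul_sub_mem hw hz ⟨ht.1.le, ht.2⟩
    calc ‖h‖ ≤ ‖w - (w + t • (z - w) + h)‖ := hh ▸ setD_le_norm_sub hw ⟨_, hp, rfl⟩
      _ = ‖h + t • (z - w)‖ := by rw [norm_sub_rev]; congr 1; abel
  have := key w hw z hz
  rw [← neg_sub, inner_neg_right] at this
  linarith [key z hz w hw]

theorem ptDelta_image_add_right_sq {A : Set E} (hne : A.Nonempty) (hbd : Bornology.IsBounded A)
    {x h : E} (horth : ∀ z ∈ A, ⟪h, x - z⟫_ℝ = 0) :
    ptDelta x ((· + h) '' A) ^ 2 = ptDelta x A ^ 2 + ‖h‖ ^ 2 := by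
  set f : ℝ → ℝ := fun t => √(t ^ 2 + ‖h‖ ^ 2)
  have hf : MonotoneOn f ((fun z => ‖x - z‖) '' A) := by
    rintro _ ⟨a, -, rfl⟩ _ ⟨b, -, rfl⟩ hab
    exact Real.sqrt_le_sqrt (by gcongr)
  have himage : (fun y => ‖x - y‖) '' ((· + h) '' A) = f '' ((fun z => ‖x - z‖) '' A) := by
    rw [image_image, image_image]
    refine image_congr fun z hz => ?_
    rw [sub_add_eq_sub_sub]
    simp only [f, sq]
    exact norm_sub_eq_sqrt_iff_real_inner_eq_zero.2 ((real_inner_comm _ _).trans (horth z hz))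
  rw [ptDelta_eq_sSup_image, himage, ptDelta_eq_sSup_image,
    ← hf.map_csSup_of_continuousWithinAt (by fun_prop) (hne.image _)
      (bddAbove_image_norm_sub hbd x)]
  exact Real.sq_sqrt (by positivity)

end InnerProduct

theorem stmt11_general {H : Type*} [NormedAddCommGroup H] [InnerProductSpace ℝ H]
    (K1 K2 : Set H)
    (h1bd : Bornology.IsBounded K1)
    (h1cv : Convex ℝ K1) (h2cv : Convex ℝ K2) (hprox : ProximalPair K1 K2) :
    ∀ x ∈ K1, ptDelta x K2 ^ 2 = ptDelta x K1 ^ 2 + setD K1 K2 ^ 2 := by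
  intro x hx
  obtain ⟨h, hh, rfl⟩ := hprox.eq_image_add_right h1cv h2cv ⟨x, hx⟩
  rw [← hh]
  exact ptDelta_image_add_right_sq ⟨x, hx⟩ h1bd fun z hz =>
    real_inner_sub_eq_zero_of_image_add_right h1cv hh hx hz

theorem stmt11 {H : Type*} [NormedAddCommGroup H] [InnerProductSpace ℝ H]
    [CompleteSpace H]
    (K1 K2 : Set H) (h1ne : K1.Nonempty) (h2ne : K2.Nonempty)
    (h1cl : IsClosed K1) (h2cl : IsClosed K2)
    (h1bd : Bornology.IsBounded K1) (h2bd : Bornology.IsBounded K2)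
    (h1cv : Convex ℝ K1) (h2cv : Convex ℝ K2) (hprox : ProximalPair K1 K2) :
    ∀ x ∈ K1, ptDelta x K2 ^ 2 = ptDelta x K1 ^ 2 + setD K1 K2 ^ 2 :=
  stmt11_general K1 K2 h1bd h1cv h2cv hprox
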